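/- arXiv:1302.5613 — 3 statements merged into one kernel-verified Lean document; each statement's English description precedes it below -/
import Mathlib

section
/- Let E1 and E2 be Lagrangian real-linear subspaces of ℂ^n with E1 ∩ E2 = {0}. Let 0 < r < R, let A(r,R) = {ζ ∈ ℂ : r < |ζ| < R}, and let h : \overline{A(r,R)} → ℂ^n be continuous on the closed annulus and holomorphic on A(r,R), with h({|ζ| = r}) ⊂ E1 and h({|ζ| = R}) ⊂ E2. Then h is constant. -/
open Set Metric MeasureTheory
open scoped Manifold

noncomputable section

/-- `ℂⁿ` with the Euclidean norm. -/
abbrev Cn (n : ℕ) := EuclideanSpace ℂ (Fin n)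

/-- The standard symplectic form `ω = Σ dxⱼ ∧ dyⱼ` on `ℂⁿ ≅ ℝ²ⁿ`. -/
def symp {n : ℕ} (v w : Cn n) : ℝ :=
  ∑ j, ((v j).re * (w j).im - (v j).im * (w j).re)

/-- A set of vectors (typically an ℝ-subspace) on which `ω` vanishes identically. -/
def IsLagSet {n : ℕ} (T : Set (Cn n)) : Prop :=
  ∀ v ∈ T, ∀ w ∈ T, symp v w = 0

/-- A set of vectors (typically an ℝ-subspace) `T` with `T ∩ iT = {0}`. -/
def IsTotallyRealSet {n : ℕ} (T : Set (Cn n)) : Prop :=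
  ∀ v ∈ T, Complex.I • v ∈ T → v = 0

/-- The polynomially convex hull of `K ⊆ ℂⁿ`. -/
def polyHull {n : ℕ} (K : Set (Cn n)) : Set (Cn n) :=
  {z | ∀ P : MvPolynomial (Fin n) ℂ,
    ‖MvPolynomial.eval (fun j => z j) P‖ ≤ ⨆ w ∈ K, ‖MvPolynomial.eval (fun j => w j) P‖}

/-- `X` is locally polynomially convex near `p`: for every sufficiently small `ε > 0`,
`X ∩ closedBall p ε` is polynomially convex. -/
def LocPolyConvexAt {n : ℕ} (X : Set (Cn n)) (p : Cn n) : Prop :=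
  ∃ ε₀ > (0:ℝ), ∀ ε : ℝ, 0 < ε → ε ≤ ε₀ →
    polyHull (X ∩ closedBall p ε) = X ∩ closedBall p ε

/-- `φ : ℝᵏ ⊇ U → ℂⁿ` is a smooth local parametrization (chart) of `L` around `p = φ u0`:
a smooth embedding of the open set `U` whose image is a relatively open piece of `L`. -/
def IsChartAt {n : ℕ} (k : ℕ) (L : Set (Cn n)) (p : Cn n)
    (φ : (Fin k → ℝ) → Cn n) (U : Set (Fin k → ℝ)) (u0 : Fin k → ℝ) : Prop :=
  IsOpen U ∧ u0 ∈ U ∧ φ u0 = p ∧ ContDiffOn ℝ (⊤ : ℕ∞) φ U ∧ Set.InjOn φ U ∧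
  (∀ u ∈ U, Function.Injective (fderiv ℝ φ u)) ∧
  (∃ V : Set (Cn n), IsOpen V ∧ p ∈ V ∧ φ '' U = L ∩ V) ∧
  (∃ ψ : Cn n → (Fin k → ℝ), ContinuousOn ψ (φ '' U) ∧ ∀ u ∈ U, ψ (φ u) = u)

/-- The tangent space (as a set of vectors) of a parametrized piece at the point `φ u`. -/
def Tangent {n k : ℕ} (φ : (Fin k → ℝ) → Cn n) (u : Fin k → ℝ) : Set (Cn n) :=
  Set.range (fderiv ℝ φ u)

/-- `L` is a smooth Lagrangian `n`-submanifold of `ℂⁿ` (near each of its points). -/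
def IsLagrangianSubmanifold {n : ℕ} (L : Set (Cn n)) : Prop :=
  ∀ p ∈ L, ∃ φ U u0, IsChartAt n L p φ U u0 ∧ ∀ u ∈ U, IsLagSet (Tangent φ u)

/-- `L` is, near `p`, a smooth `k`-dimensional totally real submanifold of `ℂⁿ`. -/
def IsTotallyRealSubmanifoldAt {n : ℕ} (k : ℕ) (L : Set (Cn n)) (p : Cn n) : Prop :=
  ∃ φ U u0, IsChartAt k L p φ U u0 ∧ ∀ u ∈ U, IsTotallyRealSet (Tangent φ u)

/-- `L1` and `L2` intersect transversally at `p`: `T_p L1 + T_p L2 = ℝ²ⁿ`. -/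
def TransversalAt {n : ℕ} (k1 k2 : ℕ) (L1 L2 : Set (Cn n)) (p : Cn n) : Prop :=
  ∃ φ1 U1 u1 φ2 U2 u2, IsChartAt k1 L1 p φ1 U1 u1 ∧ IsChartAt k2 L2 p φ2 U2 u2 ∧
    ∀ x : Cn n, ∃ v ∈ Tangent φ1 u1, ∃ w ∈ Tangent φ2 u2, x = v + w

/-- The cluster set `C(f, ∂𝔻)` of a map `f` on the open unit disc. -/
def clusterSet {n : ℕ} (f : ℂ → Cn n) : Set (Cn n) :=
  {w | ∃ ζ : ℕ → ℂ, (∀ k, ζ k ∈ ball (0:ℂ) 1) ∧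
    Filter.Tendsto (fun k => ‖ζ k‖) Filter.atTop (nhds 1) ∧
    Filter.Tendsto (fun k => f (ζ k)) Filter.atTop (nhds w)}

open scoped Real ComplexConjugate

lemma symp_eq_im_inner {n : ℕ} (v w : Cn n) :
    symp v w = (inner (𝕜 := ℂ) v w).im := by
  simp only [symp, PiLp.inner_apply, RCLike.inner_apply, Complex.im_sum, Complex.mul_im,
    starRingEnd_apply]
  refine Finset.sum_congr rfl fun j _ => ?_
  simp [Complex.star_def, Complex.conj_re, Complex.conj_im]
  ring

lemma exists_conj {n : ℕ} (E : Submodule ℝ (Cn n)) (hdim : Module.finrank ℝ E = n)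
    (hlag : IsLagSet (E : Set (Cn n))) :
    ∃ C : Cn n →L[ℝ] Cn n, (∀ (z : ℂ) (v : Cn n), C (z • v) = (starRingEnd ℂ z) • C v) ∧
      (∀ v, ‖C v‖ = ‖v‖) ∧ (∀ v, v ∈ E ↔ C v = v) := by
  letI innR : Inner ℝ (Cn n) := ⟨fun v w => (inner (𝕜 := ℂ) v w).re⟩
  letI : InnerProductSpace ℝ (Cn n) :=
    { (inferInstance : NormedSpace ℝ (Cn n)), innR with
      norm_sq_eq_re_inner := fun x => norm_sq_eq_re_inner (𝕜 := ℂ) x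
      conj_inner_symm := fun x y => by
        show (inner (𝕜 := ℂ) y x).re = (inner (𝕜 := ℂ) x y).re
        exact inner_re_symm (𝕜 := ℂ) y x
      add_left := fun x y z => by
        show (inner (𝕜 := ℂ) (x + y) z).re
          = (inner (𝕜 := ℂ) x z).re + (inner (𝕜 := ℂ) y z).re
        rw [inner_add_left, Complex.add_re]
      smul_left := fun x y r => by
        show (inner (𝕜 := ℂ) (r • x) y).re = r * (inner (𝕜 := ℂ) x y).re
        rw [show r • x = (r : ℂ) • x by
            rw [← algebraMap_smul ℂ r x]; norm_num, inner_smul_left]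
        simp }
  haveI : FiniteDimensional ℝ (Cn n) := Module.Finite.trans ℂ (Cn n)
  haveI : FiniteDimensional ℝ ↥E := inferInstance
  let b : OrthonormalBasis (Fin n) ℝ ↥E :=
    (stdOrthonormalBasis ℝ ↥E).reindex (finCongr hdim)
  set e : Fin n → Cn n := fun j => (b j : Cn n) with he
  have heE : ∀ j, e j ∈ E := fun j => (b j).2
  have hON : Orthonormal ℂ e := by
    rw [orthonormal_iff_ite]
    intro i j
    have hre : (inner (𝕜 := ℂ) (e i) (e j)).re = if i = j then 1 else 0 := by
      have h2 := (orthonormal_iff_ite.mp b.orthonormal) i j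
      rw [show ((inner (𝕜 := ℂ) (e i) (e j)).re)
          = (inner (𝕜 := ℝ) (b i : Cn n) (b j : Cn n)) from rfl, ← Submodule.coe_inner]
      exact h2
    have him : (inner (𝕜 := ℂ) (e i) (e j)).im = 0 := by
      rw [← symp_eq_im_inner]
      exact hlag _ (heE i) _ (heE j)
    apply Complex.ext
    · rw [hre]; split <;> norm_num
    · rw [him]; split <;> norm_num
  have hspan : ⊤ ≤ Submodule.span ℂ (Set.range e) := by
    apply ge_of_eq
    apply Submodule.eq_top_of_finrank_eq
    rw [finrank_span_eq_card hON.linearIndependent]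
    simp [finrank_euclideanSpace_fin]
  let B : OrthonormalBasis (Fin n) ℂ (Cn n) := OrthonormalBasis.mk hON hspan
  have hBe : ∀ j, B j = e j := fun j => by simp [B]
  -- the conjugation
  have hrepr : ∀ (v : Cn n) (i : Fin n), B.repr v i = inner (𝕜 := ℂ) (e i) v := fun v i => by
    rw [B.repr_apply_apply, hBe]
  have hCcoeff : ∀ (c : Fin n → ℂ) (i : Fin n),
      B.repr (∑ j, c j • e j) i = c i := by
    intro c i
    rw [hrepr, inner_sum]
    simp only [inner_smul_right]
    rw [Finset.sum_eq_single i]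
    · rw [(orthonormal_iff_ite.mp hON) i i]; simp
    · intro j _ hj
      rw [(orthonormal_iff_ite.mp hON) i j]
      simp [Ne.symm hj]
    · simp
  have hrsmul : ∀ (r : ℝ) (v : Cn n), r • v = (r : ℂ) • v := fun r v => by
    rw [← algebraMap_smul ℂ r v]; norm_num
  let Clin : Cn n →ₗ[ℝ] Cn n :=
    { toFun := fun v => ∑ j, (starRingEnd ℂ) (B.repr v j) • e j
      map_add' := fun v w => by
        simp only [map_add, Finsupp.coe_add]
        rw [← Finset.sum_add_distrib]
        refine Finset.sum_congr rfl fun j _ => ?_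
        simp [add_smul]
      map_smul' := fun r v => by
        simp only [RingHom.id_apply]
        rw [hrsmul r v, hrsmul r (∑ j, (starRingEnd ℂ) (B.repr v j) • e j), Finset.smul_sum]
        refine Finset.sum_congr rfl fun j _ => ?_
        rw [show B.repr ((r : ℂ) • v) = (r : ℂ) • B.repr v from B.repr.map_smul _ _]
        simp only [PiLp.smul_apply, smul_eq_mul, map_mul, Complex.conj_ofReal]
        rw [mul_smul] }
  have hkey : ∀ (v : Cn n) (i : Fin n), B.repr (Clin v) i = (starRingEnd ℂ) (B.repr v i) := by
    intro v i
    exact hCcoeff (fun j => (starRingEnd ℂ) (B.repr v j)) i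
  refine ⟨LinearMap.toContinuousLinearMap Clin, ?_, ?_, ?_⟩
  · intro z v
    show Clin (z • v) = (starRingEnd ℂ) z • Clin v
    show (∑ j, (starRingEnd ℂ) (B.repr (z • v) j) • e j)
      = (starRingEnd ℂ) z • ∑ j, (starRingEnd ℂ) (B.repr v j) • e j
    rw [Finset.smul_sum]
    refine Finset.sum_congr rfl fun j _ => ?_
    rw [show B.repr (z • v) = z • B.repr v from B.repr.map_smul _ _]
    simp only [PiLp.smul_apply, smul_eq_mul, map_mul]
    rw [mul_smul]
  · intro v
    show ‖Clin v‖ = ‖v‖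
    rw [← B.repr.norm_map (Clin v), ← B.repr.norm_map v]
    rw [EuclideanSpace.norm_eq, EuclideanSpace.norm_eq]
    congr 1
    refine Finset.sum_congr rfl fun i _ => ?_
    rw [hkey]
    simp
  · intro v
    constructor
    · intro hv
      have hreal : ∀ i, (starRingEnd ℂ) (B.repr v i) = B.repr v i := by
        intro i
        have hv2 : v = ∑ j, ((b.repr ⟨v, hv⟩ j : ℝ) : ℂ) • e j := by
          have h3 := congrArg (Submodule.subtype E) (b.sum_repr ⟨v, hv⟩)
          simp only [map_sum, Submodule.coe_subtype, SetLike.val_smul] at h3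
          rw [eq_comm]
          calc ∑ j, ((b.repr ⟨v, hv⟩ j : ℝ) : ℂ) • e j
              = ∑ j, (b.repr ⟨v, hv⟩ j) • e j :=
                Finset.sum_congr rfl fun j _ => (hrsmul _ _).symm
            _ = v := h3
        conv_lhs => rw [hv2]
        conv_rhs => rw [hv2]
        rw [hCcoeff (fun j => ((b.repr ⟨v, hv⟩ j : ℝ) : ℂ))]
        simp [Complex.conj_ofReal]
      show Clin v = v
      show (∑ j, (starRingEnd ℂ) (B.repr v j) • e j) = v
      conv_rhs => rw [← B.sum_repr v]
      refine Finset.sum_congr rfl fun j _ => ?_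
      rw [hreal, hBe]
    · intro hv
      have hreal : ∀ i, B.repr v i = ((B.repr v i).re : ℂ) := by
        intro i
        have h4 : B.repr (Clin v) i = B.repr v i := by
          rw [show Clin v = v from hv]
        rw [hkey] at h4
        exact (Complex.conj_eq_iff_re.mp h4).symm
      have hv2 : v = ∑ j, ((B.repr v j).re : ℝ) • e j := by
        conv_lhs => rw [← B.sum_repr v]
        refine Finset.sum_congr rfl fun j _ => ?_
        rw [hrsmul, ← hreal, hBe]
      rw [hv2]
      exact Submodule.sum_mem E fun j _ => Submodule.smul_mem E _ (heE j)


lemma fourier_unique {g : ℝ → ℂ} (hg : Continuous g) (hper : Function.Periodic g (2*π))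
    (hcoef : ∀ k : ℤ, (∫ t in (0:ℝ)..(2*π), Complex.exp (-(k*t)*Complex.I) * g t) = 0) :
    ∀ t, g t = 0 := by
  haveI hfact : Fact (0 < 2*π) := ⟨Real.two_pi_pos⟩
  have hg02 : g 0 = g (0 + 2*π) := by rw [zero_add, ← hper 0, zero_add]
  set G : C(AddCircle (2*π), ℂ) :=
    ⟨AddCircle.liftIco (2*π) 0 g, AddCircle.liftIco_continuous hg02 hg.continuousOn⟩ with hG
  have hcoefG : ∀ k : ℤ, fourierCoeff (G : AddCircle (2*π) → ℂ) k = 0 := by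
    intro k
    show fourierCoeff (AddCircle.liftIco (2*π) 0 g) k = 0
    rw [fourierCoeff_liftIco_eq g k, fourierCoeffOn_eq_integral]
    have : ∀ x : ℝ, fourier (-k) (x : AddCircle (0 + 2*π - 0)) • g x
        = Complex.exp (-(k*x)*Complex.I) * g x := by
      intro x
      rw [smul_eq_mul]
      congr 1
      rw [fourier_coe_apply]
      congr 1
      have hπ : (π : ℂ) ≠ 0 := Complex.ofReal_ne_zero.mpr Real.pi_ne_zero
      push_cast
      field_simp
      ring
    simp_rw [this]
    rw [show (0:ℝ) + 2*π = 2*π by ring]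
    rw [hcoef k, smul_zero]
  have hG0 : (G : AddCircle (2*π) → ℂ) = 0 := by
    have hLp : ContinuousMap.toLp (E := ℂ) 2 AddCircle.haarAddCircle ℂ G = 0 := by
      apply (fourierBasis.repr).injective
      ext k
      rw [fourierBasis_repr, fourierCoeff_toLp, hcoefG k]
      simp
    have hae : (G : AddCircle (2*π) → ℂ) =ᵐ[AddCircle.haarAddCircle] 0 := by
      have h1 := ContinuousMap.coeFn_toLp (p := 2) (μ := AddCircle.haarAddCircle) (𝕜 := ℂ) G
      rw [hLp] at h1
      have h2 := Lp.coeFn_zero (E := ℂ) (p := 2) (μ := AddCircle.haarAddCircle (T := 2*π))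
      exact (h1.symm.trans h2)
    exact (Continuous.ae_eq_iff_eq AddCircle.haarAddCircle G.continuous continuous_const).mp hae
  intro t
  obtain ⟨y, hy, hty⟩ : ∃ y ∈ Ico (0:ℝ) (2*π), g t = g y := by
    refine ⟨toIcoMod Real.two_pi_pos 0 t, ?_, ?_⟩
    · simpa using toIcoMod_mem_Ico Real.two_pi_pos 0 t
    · rw [toIcoMod]
      exact (hper.sub_zsmul_eq (x := t) (toIcoDiv Real.two_pi_pos 0 t)).symm
  rw [hty, show g y = AddCircle.liftIco (2*π) 0 g ↑y from
    (AddCircle.liftIco_coe_apply (by simpa using hy)).symm]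
  exact congrFun hG0 ↑y

section helpers

variable {n : ℕ}

-- the Fourier-type coefficient of `h` on the circle of radius ρ
def coefC (h : ℂ → Cn n) (ρ : ℝ) (k : ℤ) : Cn n :=
  ∫ t in (0:ℝ)..(2*π), Complex.exp (-(k*t)*Complex.I) • h (circleMap 0 ρ t)

lemma circleMap_mem {r R ρ : ℝ} (hr : 0 < r) (h1 : r ≤ ρ) (h2 : ρ ≤ R) (t : ℝ) :
    circleMap 0 ρ t ∈ {ζ : ℂ | r ≤ ‖ζ‖ ∧ ‖ζ‖ ≤ R} := by
  have : ‖circleMap 0 ρ t‖ = |ρ| := norm_circleMap_zero ρ t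
  rw [mem_setOf_eq, this, abs_of_pos (lt_of_lt_of_le hr h1)]
  exact ⟨h1, h2⟩

lemma circle_comp_continuous {r R ρ : ℝ} (hr : 0 < r) (h1 : r ≤ ρ) (h2 : ρ ≤ R)
    {h : ℂ → Cn n} (hcont : ContinuousOn h {ζ : ℂ | r ≤ ‖ζ‖ ∧ ‖ζ‖ ≤ R}) :
    Continuous fun t => h (circleMap 0 ρ t) :=
  hcont.comp_continuous (continuous_circleMap 0 ρ) (circleMap_mem hr h1 h2)

lemma coefC_integrable {r R ρ : ℝ} (hr : 0 < r) (h1 : r ≤ ρ) (h2 : ρ ≤ R)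
    {h : ℂ → Cn n} (hcont : ContinuousOn h {ζ : ℂ | r ≤ ‖ζ‖ ∧ ‖ζ‖ ≤ R}) (k : ℤ) :
    IntervalIntegrable (fun t => Complex.exp (-(k*t)*Complex.I) • h (circleMap 0 ρ t))
      MeasureTheory.volume 0 (2*π) := by
  apply Continuous.intervalIntegrable
  apply Continuous.fun_smul
  · exact Complex.continuous_exp.comp (by continuity)
  · exact circle_comp_continuous hr h1 h2 hcont

-- conjugation relation on a boundary circle
lemma coefC_conj {ρ : ℝ} {h : ℂ → Cn n} {C : Cn n →L[ℝ] Cn n}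
    (hCz : ∀ (z : ℂ) (v : Cn n), C (z • v) = (starRingEnd ℂ z) • C v)
    (hg : Continuous fun t => h (circleMap 0 ρ t))
    (hfix : ∀ t : ℝ, C (h (circleMap 0 ρ t)) = h (circleMap 0 ρ t)) (k : ℤ) :
    coefC h ρ k = C (coefC h ρ (-k)) := by
  unfold coefC
  rw [← ContinuousLinearMap.intervalIntegral_comp_comm C (by
    apply Continuous.intervalIntegrable
    exact (Complex.continuous_exp.comp (by continuity)).smul hg)]
  apply intervalIntegral.integral_congr
  intro t _
  simp only [Function.comp]
  rw [hCz, hfix]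
  congr 1
  rw [← Complex.exp_conj]
  congr 1
  push_cast
  simp [map_mul, Complex.conj_I]
-- the scalar identity used pointwise in the circle integral
lemma circle_scalar {ρ : ℝ} (hρ : 0 < ρ) (k : ℤ) (t : ℝ) :
    deriv (circleMap 0 ρ) t * (circleMap 0 ρ t) ^ (-(k+1))
      = Complex.I * ((ρ:ℂ)^(-k) * Complex.exp (-(k*t)*Complex.I)) := by
  have hz : circleMap 0 ρ t ≠ 0 := by
    intro hzero
    have := norm_circleMap_zero ρ t
    rw [hzero] at this
    simp [abs_of_pos hρ] at this
    linarith
  rw [deriv_circleMap]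
  have h1 : circleMap 0 ρ t * Complex.I * (circleMap 0 ρ t) ^ (-(k+1))
      = Complex.I * (circleMap 0 ρ t) ^ (-k) := by
    rw [mul_comm (circleMap 0 ρ t) Complex.I, mul_assoc]
    congr 1
    have h0 := zpow_add₀ hz 1 (-(k+1))
    rw [zpow_one] at h0
    rw [← h0]
    congr 1
    ring
  rw [h1]
  congr 1
  have h2 : circleMap 0 ρ t = (ρ:ℂ) * Complex.exp (t * Complex.I) := by
    simp [circleMap]
  rw [h2, mul_zpow]
  congr 1
  rw [← Complex.exp_int_mul]
  congr 1
  push_cast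
  ring

lemma circleIntegral_eq_coefC {r R ρ : ℝ} (hr : 0 < r) (h1 : r ≤ ρ) (h2 : ρ ≤ R)
    {h : ℂ → Cn n} (hcont : ContinuousOn h {ζ : ℂ | r ≤ ‖ζ‖ ∧ ‖ζ‖ ≤ R}) (k : ℤ) :
    (∮ z in C(0, ρ), (z ^ (-(k+1))) • h z) = (Complex.I * (ρ:ℂ)^(-k)) • coefC h ρ k := by
  have hρ : 0 < ρ := lt_of_lt_of_le hr h1
  show (∫ t in (0:ℝ)..(2*π),
      deriv (circleMap 0 ρ) t • ((circleMap 0 ρ t) ^ (-(k+1)) • h (circleMap 0 ρ t))) = _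
  rw [show (Complex.I * (ρ:ℂ)^(-k)) • coefC h ρ k
      = ∫ t in (0:ℝ)..(2*π), (Complex.I * (ρ:ℂ)^(-k)) •
          (Complex.exp (-(k*t)*Complex.I) • h (circleMap 0 ρ t)) from by
    rw [coefC, ← intervalIntegral.integral_smul]]
  apply intervalIntegral.integral_congr
  intro t _
  dsimp only
  rw [smul_smul, smul_smul, circle_scalar hρ k t]
  congr 1
  ring

lemma annulus_coeff_eq {r R : ℝ} (hr : 0 < r) (hrR : r < R)
    {h : ℂ → Cn n} (hcont : ContinuousOn h {ζ : ℂ | r ≤ ‖ζ‖ ∧ ‖ζ‖ ≤ R})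
    (hhol : DifferentiableOn ℂ h {ζ : ℂ | r < ‖ζ‖ ∧ ‖ζ‖ < R}) (k : ℤ) :
    ((R:ℂ)^(-k)) • coefC h R k = ((r:ℂ)^(-k)) • coefC h r k := by
  have hsetc : closedBall (0:ℂ) R \ ball 0 r = {ζ : ℂ | r ≤ ‖ζ‖ ∧ ‖ζ‖ ≤ R} := by
    ext z
    simp only [mem_diff, mem_closedBall, mem_ball, dist_zero_right, mem_setOf_eq, not_lt]
    tauto
  have hseto : ball (0:ℂ) R \ closedBall 0 r = {ζ : ℂ | r < ‖ζ‖ ∧ ‖ζ‖ < R} := by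
    ext z
    simp only [mem_diff, mem_ball, mem_closedBall, dist_zero_right, mem_setOf_eq, not_le]
    tauto
  have hopen : IsOpen {ζ : ℂ | r < ‖ζ‖ ∧ ‖ζ‖ < R} := by
    rw [← hseto]
    exact isOpen_ball.sdiff isClosed_closedBall
  have key : (∮ z in C(0, R), (z ^ (-(k+1))) • h z) = ∮ z in C(0, r), (z ^ (-(k+1))) • h z := by
    apply Complex.circleIntegral_eq_of_differentiable_on_annulus_off_countable hr hrR.le
      Set.countable_empty
    · rw [hsetc]
      apply ContinuousOn.fun_smul _ hcont
      intro z hz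
      have hz0 : z ≠ 0 := by
        intro h0; rw [h0] at hz; simp at hz; linarith [hz.1]
      exact ((differentiableAt_zpow.mpr (Or.inl hz0)).continuousAt).continuousWithinAt
    · intro z hz
      rw [diff_empty, hseto] at hz
      have hz0 : z ≠ 0 := by
        intro h0; rw [h0] at hz; simp at hz; linarith [hz.1]
      exact (differentiableAt_zpow.mpr (Or.inl hz0)).smul
        (hhol.differentiableAt (hopen.mem_nhds hz))
  rw [circleIntegral_eq_coefC hr le_rfl hrR.le hcont k,
    circleIntegral_eq_coefC hr hrR.le le_rfl hcont k] at key
  have hcancel : ∀ (a : ℂ) (v : Cn n), (-Complex.I) • (Complex.I * a) • v = a • v := by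
    intro a v
    rw [smul_smul, show (-Complex.I) * (Complex.I * a) = -(Complex.I*Complex.I)*a from by ring,
      Complex.I_mul_I]
    ring_nf
  have h5 := congrArg (fun x => (-Complex.I) • x) key
  rw [hcancel, hcancel] at h5
  exact h5

lemma boundary_zero {r R ρ : ℝ} (hr : 0 < r) (h1 : r ≤ ρ) (h2 : ρ ≤ R)
    {h : ℂ → Cn n} (hcont : ContinuousOn h {ζ : ℂ | r ≤ ‖ζ‖ ∧ ‖ζ‖ ≤ R})
    (hcoef : ∀ k : ℤ, coefC h ρ k = 0) :
    ∀ ζ : ℂ, ‖ζ‖ = ρ → h ζ = 0 := by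
  have hρ : 0 < ρ := lt_of_lt_of_le hr h1
  have hg : Continuous fun t => h (circleMap 0 ρ t) := circle_comp_continuous hr h1 h2 hcont
  have hzero : ∀ t : ℝ, h (circleMap 0 ρ t) = 0 := by
    have hcomp : ∀ j : Fin n, ∀ t : ℝ, h (circleMap 0 ρ t) j = 0 := by
      intro j
      apply fourier_unique (g := fun t => h (circleMap 0 ρ t) j)
      · exact ((EuclideanSpace.proj (𝕜 := ℂ) j).continuous).comp hg
      · intro t
        simp only []
        rw [(periodic_circleMap 0 ρ) t]
      · intro k
        have hc := hcoef k
        have hcm := (EuclideanSpace.proj (𝕜 := ℂ) j).intervalIntegral_comp_comm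
          (coefC_integrable hr h1 h2 hcont k)
        rw [show (∫ t in (0:ℝ)..(2*π), Complex.exp (-(k*t)*Complex.I)
              • h (circleMap 0 ρ t)) = coefC h ρ k from rfl, hc] at hcm
        simp only [map_zero] at hcm
        refine Eq.trans ?_ hcm
        apply intervalIntegral.integral_congr
        intro t _
        simp [Function.comp]
    intro t
    ext j
    simpa using hcomp j t
  intro ζ hζ
  have : ζ = circleMap 0 ρ (Complex.arg ζ) := by
    have := Complex.norm_mul_exp_arg_mul_I ζ
    rw [show ‖ζ‖ = ρ from hζ] at this
    simp only [circleMap, zero_add]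
    exact this.symm
  rw [this]
  exact hzero _

lemma annulus_zero {r R : ℝ} (hr : 0 < r) (hrR : r < R)
    {h : ℂ → Cn n} (hcont : ContinuousOn h {ζ : ℂ | r ≤ ‖ζ‖ ∧ ‖ζ‖ ≤ R})
    (hhol : DifferentiableOn ℂ h {ζ : ℂ | r < ‖ζ‖ ∧ ‖ζ‖ < R})
    (hz : ∀ ζ : ℂ, ‖ζ‖ = r ∨ ‖ζ‖ = R → h ζ = 0) :
    ∀ ζ ∈ {ζ : ℂ | r ≤ ‖ζ‖ ∧ ‖ζ‖ ≤ R}, h ζ = 0 := by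
  set U : Set ℂ := {ζ : ℂ | r < ‖ζ‖ ∧ ‖ζ‖ < R} with hU
  set A : Set ℂ := {ζ : ℂ | r ≤ ‖ζ‖ ∧ ‖ζ‖ ≤ R} with hA
  have hseto : ball (0:ℂ) R \ closedBall 0 r = U := by
    ext z
    simp only [mem_diff, mem_ball, mem_closedBall, dist_zero_right, mem_setOf_eq, not_le, hU]
    tauto
  have hsetc : closedBall (0:ℂ) R \ ball 0 r = A := by
    ext z
    simp only [mem_diff, mem_closedBall, mem_ball, dist_zero_right, mem_setOf_eq, not_lt, hA]
    tauto
  have hUopen : IsOpen U := by rw [← hseto]; exact isOpen_ball.sdiff isClosed_closedBall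
  have hAclosed : IsClosed A := by rw [← hsetc]; exact isClosed_closedBall.sdiff isOpen_ball
  have hUA : U ⊆ A := fun z hzU => ⟨hzU.1.le, hzU.2.le⟩
  have hclU : closure U ⊆ A := closure_minimal hUA hAclosed
  have hUb : Bornology.IsBounded U := by
    apply (isBounded_ball (x := (0:ℂ)) (r := R)).subset
    intro z hzU
    rw [mem_ball, dist_zero_right]
    exact hzU.2
  have hdc : DiffContOnCl ℂ h U := ⟨hhol, hcont.mono hclU⟩
  have hfr : ∀ z ∈ frontier U, ‖h z‖ ≤ 0 := by
    intro z hzf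
    rw [hUopen.frontier_eq] at hzf
    have hz1 : z ∈ closure U := hzf.1
    have hz2 : z ∉ U := hzf.2
    have hzA : z ∈ A := hclU hz1
    have : ‖z‖ = r ∨ ‖z‖ = R := by
      rcases hzA with ⟨ha, hb⟩
      by_contra hcon
      push_neg at hcon
      exact hz2 ⟨lt_of_le_of_ne ha (Ne.symm hcon.1), lt_of_le_of_ne hb hcon.2⟩
    rw [hz z this]
    simp
  -- every point of A lies in the closure of U
  have hAclU : ∀ ζ ∈ A, ζ ∈ closure U := by
    intro ζ hζ
    rcases hζ with ⟨ha, hb⟩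
    have hζ0 : ζ ≠ 0 := by
      intro h0; rw [h0] at ha; simp at ha; linarith
    have hnorm0 : 0 < ‖ζ‖ := lt_of_lt_of_le hr ha
    set m : ℝ := (r + R) / 2 with hm
    have hrm : r < m := by rw [hm]; linarith
    have hmR : m < R := by rw [hm]; linarith
    set f : ℝ → ℂ := fun s => (((1-s) + s * (m / ‖ζ‖) : ℝ) : ℂ) * ζ with hf
    have hf0 : f 0 = ζ := by simp [hf]
    have hfc : Continuous f := by
      apply Continuous.mul _ continuous_const
      have : Continuous fun s : ℝ => ((1-s) + s * (m / ‖ζ‖) : ℝ) := by continuity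
      exact Complex.continuous_ofReal.comp this
    have hfU : ∀ s : ℝ, 0 < s → s ≤ 1 → f s ∈ U := by
      intro s hs0 hs1
      have hcoe : (0:ℝ) < (1-s) + s * (m / ‖ζ‖) := by
        have : 0 < m / ‖ζ‖ := div_pos (by linarith) hnorm0
        nlinarith
      have hnf : ‖f s‖ = (1-s) * ‖ζ‖ + s * m := by
        rw [hf]
        simp only [norm_mul, Complex.norm_real, Real.norm_eq_abs]
        rw [abs_of_pos hcoe]
        have habs : ‖ζ‖ ≠ 0 := by
          exact ne_of_gt hnorm0
        field_simp [habs]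
      constructor
      · rw [hnf]
        nlinarith
      · rw [hnf]
        nlinarith
    have htend : Filter.Tendsto (fun k : ℕ => f (1/(k+1))) Filter.atTop (nhds ζ) := by
      rw [← hf0]
      apply (hfc.tendsto 0).comp
      exact tendsto_one_div_add_atTop_nhds_zero_nat
    apply mem_closure_of_tendsto htend
    filter_upwards with k
    apply hfU
    · positivity
    · rw [div_le_one (by positivity)]
      linarith [Nat.cast_nonneg (α := ℝ) k]
  intro ζ hζ
  have := Complex.norm_le_of_forall_mem_frontier_norm_le hUb hdc hfr (hAclU ζ hζ)
  simpa using norm_le_zero_iff.mp this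

end helpers

/-- No nonconstant analytic annulus has its two boundary circles glued to
two transverse Lagrangian planes. -/
theorem statement2 (n : ℕ) (E1 E2 : Submodule ℝ (Cn n))
    (h1dim : Module.finrank ℝ E1 = n) (h1lag : IsLagSet (E1 : Set (Cn n)))
    (h2dim : Module.finrank ℝ E2 = n) (h2lag : IsLagSet (E2 : Set (Cn n)))
    (hint : E1 ⊓ E2 = ⊥)
    (r R : ℝ) (hr : 0 < r) (hrR : r < R)
    (h : ℂ → Cn n)
    (hcont : ContinuousOn h {ζ : ℂ | r ≤ ‖ζ‖ ∧ ‖ζ‖ ≤ R})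
    (hhol : DifferentiableOn ℂ h {ζ : ℂ | r < ‖ζ‖ ∧ ‖ζ‖ < R})
    (hb1 : ∀ ζ : ℂ, ‖ζ‖ = r → h ζ ∈ E1)
    (hb2 : ∀ ζ : ℂ, ‖ζ‖ = R → h ζ ∈ E2) :
    ∀ ζ₁ ∈ {ζ : ℂ | r ≤ ‖ζ‖ ∧ ‖ζ‖ ≤ R}, ∀ ζ₂ ∈ {ζ : ℂ | r ≤ ‖ζ‖ ∧ ‖ζ‖ ≤ R},
      h ζ₁ = h ζ₂ := by
  obtain ⟨C1, hC1z, hC1n, hC1m⟩ := exists_conj E1 h1dim h1lag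
  obtain ⟨C2, hC2z, hC2n, hC2m⟩ := exists_conj E2 h2dim h2lag
  have hR0 : (0:ℝ) < R := lt_trans hr hrR
  have hcr : ∀ t : ℝ, ‖circleMap 0 r t‖ = r := fun t => by
    rw [show ‖circleMap 0 r t‖ = |r| from norm_circleMap_zero r t, abs_of_pos hr]
  have hcR : ∀ t : ℝ, ‖circleMap 0 R t‖ = R := fun t => by
    rw [show ‖circleMap 0 R t‖ = |R| from norm_circleMap_zero R t, abs_of_pos hR0]
  have hfix1 : ∀ t : ℝ, C1 (h (circleMap 0 r t)) = h (circleMap 0 r t) := fun t =>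
    (hC1m _).mp (hb1 _ (hcr t))
  have hfix2 : ∀ t : ℝ, C2 (h (circleMap 0 R t)) = h (circleMap 0 R t) := fun t =>
    (hC2m _).mp (hb2 _ (hcR t))
  have hg1 : Continuous fun t => h (circleMap 0 r t) :=
    circle_comp_continuous hr le_rfl hrR.le hcont
  have hg2 : Continuous fun t => h (circleMap 0 R t) :=
    circle_comp_continuous hr hrR.le le_rfl hcont
  have hconj1 : ∀ k : ℤ, coefC h r k = C1 (coefC h r (-k)) := fun k =>
    coefC_conj hC1z hg1 hfix1 k
  have hconj2 : ∀ k : ℤ, coefC h R k = C2 (coefC h R (-k)) := fun k =>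
    coefC_conj hC2z hg2 hfix2 k
  have hnorm1 : ∀ k : ℤ, ‖coefC h r k‖ = ‖coefC h r (-k)‖ := fun k => by
    rw [hconj1 k, hC1n]
  have hnorm2 : ∀ k : ℤ, ‖coefC h R k‖ = ‖coefC h R (-k)‖ := fun k => by
    rw [hconj2 k, hC2n]
  have hkey : ∀ k : ℤ, ((R:ℂ)^(-k)) • coefC h R k = ((r:ℂ)^(-k)) • coefC h r k :=
    annulus_coeff_eq hr hrR hcont hhol
  have hrealkey : ∀ k : ℤ, (R:ℝ)^(-k) * ‖coefC h R k‖ = (r:ℝ)^(-k) * ‖coefC h r k‖ := by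
    intro k
    have hc := congrArg norm (hkey k)
    rw [norm_smul, norm_smul, norm_zpow, norm_zpow] at hc
    rwa [show ‖(R:ℂ)‖ = R from by rw [Complex.norm_real, Real.norm_eq_abs, abs_of_pos hR0],
      show ‖(r:ℂ)‖ = r from by rw [Complex.norm_real, Real.norm_eq_abs, abs_of_pos hr]] at hc
  have hvan : ∀ k : ℤ, coefC h r k = 0 ∧ coefC h R k = 0 := by
    intro k
    rcases eq_or_ne k 0 with hk0 | hk
    · subst hk0
      have heq : coefC h R 0 = coefC h r 0 := by
        have := hkey 0
        simpa using this
      have hm1 : coefC h r 0 ∈ E1 := (hC1m _).mpr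
        (by have := hconj1 0; rw [neg_zero] at this; exact this.symm)
      have hm2 : coefC h R 0 ∈ E2 := (hC2m _).mpr
        (by have := hconj2 0; rw [neg_zero] at this; exact this.symm)
      rw [heq] at hm2
      have : coefC h r 0 ∈ E1 ⊓ E2 := ⟨hm1, hm2⟩
      rw [hint, Submodule.mem_bot] at this
      rw [this, heq, this]
      exact ⟨rfl, rfl⟩
    · set a := ‖coefC h R k‖ with ha
      set b := ‖coefC h r k‖ with hb
      have h1 := hrealkey k
      have h2 := hrealkey (-k)
      rw [← hnorm1 k, ← hnorm2 k, neg_neg] at h2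
      rw [← ha, ← hb] at h1 h2
      have hxpos : (0:ℝ) < R^(k:ℤ) := zpow_pos hR0 k
      have hypos : (0:ℝ) < r^(k:ℤ) := zpow_pos hr k
      have h1' : (R^(k:ℤ))⁻¹ * a = (r^(k:ℤ))⁻¹ * b := by
        rwa [zpow_neg, zpow_neg] at h1
      have h0a : 0 ≤ a := ha ▸ norm_nonneg _
      have h0b : 0 ≤ b := hb ▸ norm_nonneg _
      have hprod : (0:ℝ) < r^(k:ℤ) * R^(k:ℤ) := mul_pos hypos hxpos
      have hsq : a * a = b * b := by
        have hmul := congrArg₂ (· * ·) h1' h2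
        apply mul_right_cancel₀ (ne_of_gt hprod)
        field_simp at hmul ⊢
        nlinarith [hmul]
      have hab : a = b := by
        rcases lt_trichotomy a b with hlt | heqq | hgt
        · exfalso; nlinarith
        · exact heqq
        · exfalso; nlinarith
      have hxy : r^(k:ℤ) ≠ R^(k:ℤ) := by
        intro hcon
        rcases lt_or_gt_of_ne hk with hkneg | hkpos
        · have hpow : r^(-k) < R^(-k) := by
            rw [show (-k) = ((-k).toNat : ℤ) by omega, zpow_natCast, zpow_natCast]
            exact pow_lt_pow_left₀ hrR hr.le (by omega)
          rw [zpow_neg, zpow_neg, hcon] at hpow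
          exact lt_irrefl _ hpow
        · have hpow : r^(k:ℤ) < R^(k:ℤ) := by
            rw [show (k:ℤ) = (k.toNat : ℤ) by omega, zpow_natCast, zpow_natCast]
            exact pow_lt_pow_left₀ hrR hr.le (by omega)
          rw [hcon] at hpow
          exact lt_irrefl _ hpow
      have hbz : b = 0 := by
        rw [hab] at h2
        by_contra hb0
        exact hxy (mul_right_cancel₀ hb0 h2.symm)
      constructor
      · rw [hb] at hbz; exact norm_eq_zero.mp hbz
      · have h6 : a = 0 := hab.trans hbz
        rw [ha] at h6; exact norm_eq_zero.mp h6
  have hz : ∀ ζ : ℂ, ‖ζ‖ = r ∨ ‖ζ‖ = R → h ζ = 0 := by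
    intro ζ hζ
    rcases hζ with hζ | hζ
    · exact boundary_zero hr le_rfl hrR.le hcont (fun k => (hvan k).1) ζ hζ
    · exact boundary_zero hr hrR.le le_rfl hcont (fun k => (hvan k).2) ζ hζ
  intro ζ₁ h1m ζ₂ h2m
  rw [annulus_zero hr hrR hcont hhol hz ζ₁ h1m, annulus_zero hr hrR hcont hhol hz ζ₂ h2m]
end
end

section
/- Let A be a real n×n matrix such that every purely imaginary eigenvalue it (t ∈ ℝ) of A satisfies |t| < 1. Then there exist a holomorphic polynomial p on ℂ^n, homogeneous of degree 2, and a constant C > 0 such that Im p(x) ≤ −C‖x‖² for every x ∈ ℝ^n ⊂ ℂ^n, and Im p(Ay + iy) ≥ C‖y‖² for every y ∈ ℝ^n. -/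
open Set Metric MeasureTheory
open scoped Manifold

noncomputable section

section St4Aux

open Matrix Finset Complex

namespace St4

variable {n : ℕ}





/-- squared euclidean norm -/
def nrm (v : Fin n → ℂ) : ℝ := ∑ i, Complex.normSq (v i)

/-- real part of the hermitian-style quadratic form -/
def qf (M : Matrix (Fin n) (Fin n) ℂ) (v : Fin n → ℂ) : ℝ :=
  (star v ⬝ᵥ M *ᵥ v).re

lemma nrm_nonneg (v : Fin n → ℂ) : 0 ≤ nrm v :=
  Finset.sum_nonneg fun i _ => Complex.normSq_nonneg _

lemma abs_le_sqrt_nrm (v : Fin n → ℂ) (i : Fin n) : Complex.normSq (v i) ≤ nrm v :=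
  Finset.single_le_sum (f := fun i => Complex.normSq (v i))
    (fun j _ => Complex.normSq_nonneg _) (Finset.mem_univ i)

lemma abs_mul_abs_le_nrm (v : Fin n → ℂ) (i j : Fin n) :
    ‖v i‖ * ‖v j‖ ≤ nrm v := by
  have h1 : ‖v i‖ ^ 2 ≤ nrm v := by
    rw [Complex.sq_norm]; exact abs_le_sqrt_nrm v i
  have h2 : ‖v j‖ ^ 2 ≤ nrm v := by
    rw [Complex.sq_norm]; exact abs_le_sqrt_nrm v j
  nlinarith [norm_nonneg (v i), norm_nonneg (v j), nrm_nonneg v]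

lemma qf_abs_le (N : Matrix (Fin n) (Fin n) ℂ) (v : Fin n → ℂ) :
    |qf N v| ≤ (∑ i, ∑ j, ‖N i j‖) * nrm v := by
  have h1 : |qf N v| ≤ ‖star v ⬝ᵥ N *ᵥ v‖ := Complex.abs_re_le_norm _
  refine h1.trans ?_
  have h2 : ‖star v ⬝ᵥ N *ᵥ v‖ ≤
      ∑ i, ∑ j, ‖N i j‖ * (‖v i‖ * ‖v j‖) := by
    refine (norm_sum_le _ _).trans ?_
    refine Finset.sum_le_sum fun i _ => ?_
    simp only [Pi.star_apply, Matrix.mulVec, dotProduct, norm_mul]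
    calc ‖starRingEnd ℂ (v i)‖ * ‖∑ j, N i j * v j‖
        ≤ ‖v i‖ * ∑ j, ‖N i j‖ * ‖v j‖ := by
          rw [Complex.norm_conj]
          refine mul_le_mul_of_nonneg_left ((norm_sum_le _ _).trans
            (le_of_eq (Finset.sum_congr rfl fun j _ => norm_mul _ _)))
            (norm_nonneg _)
      _ = ∑ j, ‖N i j‖ * (‖v i‖ * ‖v j‖) := by
          rw [Finset.mul_sum]; exact Finset.sum_congr rfl fun j _ => by ring
  refine h2.trans ?_
  rw [Finset.sum_mul]
  refine Finset.sum_le_sum fun i _ => ?_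
  rw [Finset.sum_mul]
  exact Finset.sum_le_sum fun j _ =>
    mul_le_mul_of_nonneg_left (abs_mul_abs_le_nrm v i j) (norm_nonneg _)

lemma nrm_mulVec_le (G : Matrix (Fin n) (Fin n) ℂ) (w : Fin n → ℂ) :
    nrm (G *ᵥ w) ≤ (∑ i, ∑ j, Complex.normSq (G i j)) * nrm w := by
  unfold nrm
  rw [Finset.sum_mul]
  refine Finset.sum_le_sum fun i _ => ?_
  simp only [Matrix.mulVec, dotProduct]
  have h1 : ‖∑ j, G i j * w j‖ ≤ ∑ j, ‖G i j‖ * ‖w j‖ :=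
    (norm_sum_le _ _).trans
      (le_of_eq (Finset.sum_congr rfl fun j _ => norm_mul _ _))
  have h2 : Complex.normSq (∑ j, G i j * w j) ≤
      (∑ j, ‖G i j‖ * ‖w j‖) ^ 2 := by
    rw [← Complex.sq_norm]
    exact pow_le_pow_left₀ (norm_nonneg _) h1 2
  refine h2.trans ?_
  have h3 := Finset.sum_mul_sq_le_sq_mul_sq Finset.univ
    (fun j => ‖G i j‖) (fun j => ‖w j‖)
  calc (∑ j, ‖G i j‖ * ‖w j‖) ^ 2
      ≤ (∑ j, ‖G i j‖ ^ 2) * (∑ j, ‖w j‖ ^ 2) := h3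
    _ = (∑ j, Complex.normSq (G i j)) * ∑ j, Complex.normSq (w j) := by
        simp [Complex.sq_norm]

/-- The key solvability predicate. -/
def Good (A : Matrix (Fin n) (Fin n) ℂ) : Prop :=
  ∃ S Q : Matrix (Fin n) (Fin n) ℂ, ∃ c : ℝ, 0 < c ∧
    (∀ v, c * nrm v ≤ qf Q v) ∧
    (∀ v, c * nrm v ≤ qf (Aᴴ * S + S * A + Q - Aᴴ * Q * A) v)





lemma qf_add (X Y : Matrix (Fin n) (Fin n) ℂ) (v : Fin n → ℂ) :
    qf (X + Y) v = qf X v + qf Y v := by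
  unfold qf
  rw [Matrix.add_mulVec, dotProduct_add, Complex.add_re]

lemma qf_sub (X Y : Matrix (Fin n) (Fin n) ℂ) (v : Fin n → ℂ) :
    qf (X - Y) v = qf X v - qf Y v := by
  unfold qf
  rw [Matrix.sub_mulVec, dotProduct_sub, Complex.sub_re]

lemma qf_congr (N G : Matrix (Fin n) (Fin n) ℂ) (v : Fin n → ℂ) :
    qf (Gᴴ * N * G) v = qf N (G *ᵥ v) := by
  unfold qf
  rw [← Matrix.mulVec_mulVec, ← Matrix.mulVec_mulVec, Matrix.dotProduct_mulVec,
    ← Matrix.star_mulVec]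

lemma Good.transport {B G G' : Matrix (Fin n) (Fin n) ℂ}
    (hB : Good B) (h1 : G * G' = 1) (h2 : G' * G = 1) : Good (G * B * G') := by
  obtain ⟨S, Q, c, hc, hQ, hM⟩ := hB
  set A := G * B * G' with hA
  have key : ∀ N N' : Matrix (Fin n) (Fin n) ℂ,
      Aᴴ * (G'ᴴ * N * G') + (G'ᴴ * N' * G') * A = G'ᴴ * (Bᴴ * N + N' * B) * G' := by
    intro N N'
    have hAH : Aᴴ = G'ᴴ * Bᴴ * Gᴴ := by
      rw [hA, Matrix.conjTranspose_mul, Matrix.conjTranspose_mul, Matrix.mul_assoc]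
    rw [hAH, hA]
    have e1 : Gᴴ * G'ᴴ = 1 := by
      rw [← Matrix.conjTranspose_mul, h2, Matrix.conjTranspose_one]
    calc G'ᴴ * Bᴴ * Gᴴ * (G'ᴴ * N * G') + G'ᴴ * N' * G' * (G * B * G')
        = G'ᴴ * Bᴴ * (Gᴴ * G'ᴴ) * N * G' + G'ᴴ * N' * (G' * G) * B * G' := by
          noncomm_ring
      _ = G'ᴴ * (Bᴴ * N + N' * B) * G' := by rw [e1, h2]; noncomm_ring
  have keyQ : Aᴴ * (G'ᴴ * Q * G') * A = G'ᴴ * (Bᴴ * Q * B) * G' := by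
    have hAH : Aᴴ = G'ᴴ * Bᴴ * Gᴴ := by
      rw [hA, Matrix.conjTranspose_mul, Matrix.conjTranspose_mul, Matrix.mul_assoc]
    have e1 : Gᴴ * G'ᴴ = 1 := by
      rw [← Matrix.conjTranspose_mul, h2, Matrix.conjTranspose_one]
    rw [hAH, hA]
    calc G'ᴴ * Bᴴ * Gᴴ * (G'ᴴ * Q * G') * (G * B * G')
        = G'ᴴ * Bᴴ * (Gᴴ * G'ᴴ) * Q * (G' * G) * B * G' := by noncomm_ring
      _ = G'ᴴ * (Bᴴ * Q * B) * G' := by rw [e1, h2]; noncomm_ring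
  have hMeq : Aᴴ * (G'ᴴ * S * G') + (G'ᴴ * S * G') * A + G'ᴴ * Q * G'
      - Aᴴ * (G'ᴴ * Q * G') * A
      = G'ᴴ * (Bᴴ * S + S * B + Q - Bᴴ * Q * B) * G' := by
    rw [key S S, keyQ]
    noncomm_ring
  have hF : (0:ℝ) < (∑ i, ∑ j, Complex.normSq (G i j)) + 1 := by
    have : (0:ℝ) ≤ ∑ i, ∑ j, Complex.normSq (G i j) :=
      Finset.sum_nonneg fun i _ => Finset.sum_nonneg fun j _ => Complex.normSq_nonneg _
    linarith
  refine ⟨G'ᴴ * S * G', G'ᴴ * Q * G', c / ((∑ i, ∑ j, Complex.normSq (G i j)) + 1),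
    div_pos hc hF, ?_, ?_⟩
  · intro v
    rw [qf_congr]
    set w := G' *ᵥ v with hw
    have hv : G *ᵥ w = v := by
      rw [hw, Matrix.mulVec_mulVec, h1, Matrix.one_mulVec]
    have hn : nrm v ≤ ((∑ i, ∑ j, Complex.normSq (G i j)) + 1) * nrm w := by
      calc nrm v = nrm (G *ᵥ w) := by rw [hv]
        _ ≤ (∑ i, ∑ j, Complex.normSq (G i j)) * nrm w := nrm_mulVec_le G w
        _ ≤ ((∑ i, ∑ j, Complex.normSq (G i j)) + 1) * nrm w :=
            mul_le_mul_of_nonneg_right (by linarith) (nrm_nonneg w)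
    calc c / ((∑ i, ∑ j, Complex.normSq (G i j)) + 1) * nrm v
        ≤ c / ((∑ i, ∑ j, Complex.normSq (G i j)) + 1)
            * (((∑ i, ∑ j, Complex.normSq (G i j)) + 1) * nrm w) :=
          mul_le_mul_of_nonneg_left hn (le_of_lt (div_pos hc hF))
      _ = c * nrm w := by field_simp
      _ ≤ qf Q w := hQ w
  · intro v
    rw [hMeq, qf_congr]
    set w := G' *ᵥ v with hw
    have hv : G *ᵥ w = v := by
      rw [hw, Matrix.mulVec_mulVec, h1, Matrix.one_mulVec]
    have hn : nrm v ≤ ((∑ i, ∑ j, Complex.normSq (G i j)) + 1) * nrm w := by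
      calc nrm v = nrm (G *ᵥ w) := by rw [hv]
        _ ≤ (∑ i, ∑ j, Complex.normSq (G i j)) * nrm w := nrm_mulVec_le G w
        _ ≤ ((∑ i, ∑ j, Complex.normSq (G i j)) + 1) * nrm w :=
            mul_le_mul_of_nonneg_right (by linarith) (nrm_nonneg w)
    calc c / ((∑ i, ∑ j, Complex.normSq (G i j)) + 1) * nrm v
        ≤ c / ((∑ i, ∑ j, Complex.normSq (G i j)) + 1)
            * (((∑ i, ∑ j, Complex.normSq (G i j)) + 1) * nrm w) :=
          mul_le_mul_of_nonneg_left hn (le_of_lt (div_pos hc hF))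
      _ = c * nrm w := by field_simp
      _ ≤ qf (Bᴴ * S + S * B + Q - Bᴴ * Q * B) w := hM w


lemma scalar_choice (μ : ℂ) (h : μ.re = 0 → |μ.im| < 1) :
    ∃ s q : ℝ, 0 < q ∧ 0 < 2 * μ.re * s + q * (1 - Complex.normSq μ) := by
  by_cases hre : μ.re = 0
  · refine ⟨0, 1, one_pos, ?_⟩
    have := h hre
    have h2 : μ.im ^ 2 < 1 := by
      have := abs_lt.mp this
      nlinarith
    rw [Complex.normSq_apply, hre]
    nlinarith
  · refine ⟨(Complex.normSq μ + 1) / (2 * μ.re), 1, one_pos, ?_⟩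
    have h2 : 2 * μ.re ≠ 0 := by simpa using hre
    rw [mul_div_assoc']
    rw [mul_div_cancel_left₀ _ h2]
    nlinarith [Complex.normSq_nonneg μ]

/-- entrywise convergence of matrices -/
def ET (F : ℕ → Matrix (Fin n) (Fin n) ℂ) (L : Matrix (Fin n) (Fin n) ℂ) : Prop :=
  ∀ i j, Filter.Tendsto (fun d => F d i j) Filter.atTop (nhds (L i j))

lemma ET.const (L : Matrix (Fin n) (Fin n) ℂ) : ET (fun _ => L) L :=
  fun _ _ => tendsto_const_nhds

lemma ET.add {F F' : ℕ → Matrix (Fin n) (Fin n) ℂ} {L L' : Matrix (Fin n) (Fin n) ℂ}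
    (h : ET F L) (h' : ET F' L') : ET (fun d => F d + F' d) (L + L') := by
  intro i j
  simpa [Matrix.add_apply] using (h i j).add (h' i j)

lemma ET.sub {F F' : ℕ → Matrix (Fin n) (Fin n) ℂ} {L L' : Matrix (Fin n) (Fin n) ℂ}
    (h : ET F L) (h' : ET F' L') : ET (fun d => F d - F' d) (L - L') := by
  intro i j
  simpa [Matrix.sub_apply] using (h i j).sub (h' i j)

lemma ET.mul {F F' : ℕ → Matrix (Fin n) (Fin n) ℂ} {L L' : Matrix (Fin n) (Fin n) ℂ}
    (h : ET F L) (h' : ET F' L') : ET (fun d => F d * F' d) (L * L') := by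
  intro i j
  simp only [Matrix.mul_apply]
  exact tendsto_finset_sum _ fun k _ => (h i k).mul (h' k j)

lemma ET.ctrans {F : ℕ → Matrix (Fin n) (Fin n) ℂ} {L : Matrix (Fin n) (Fin n) ℂ}
    (h : ET F L) : ET (fun d => (F d)ᴴ) Lᴴ := by
  intro i j
  simpa [Matrix.conjTranspose_apply] using (h j i).star

lemma qf_diag (g : Fin n → ℝ) (v : Fin n → ℂ) :
    qf (Matrix.diagonal (fun i => (g i : ℂ))) v = ∑ i, g i * Complex.normSq (v i) := by
  unfold qf
  rw [dotProduct]
  rw [Complex.re_sum]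
  refine Finset.sum_congr rfl fun i _ => ?_
  rw [Matrix.mulVec_diagonal]
  simp only [Pi.star_apply, RCLike.star_def]
  have : (starRingEnd ℂ) (v i) * ((g i : ℂ) * v i) = (g i : ℂ) * ((starRingEnd ℂ) (v i) * v i) := by
    ring
  rw [this, ← Complex.normSq_eq_conj_mul_self]
  simp [Complex.ofReal_mul]

lemma good_triangular (T : Matrix (Fin n) (Fin n) ℂ)
    (htri : ∀ i j : Fin n, j < i → T i j = 0)
    (hdiag : ∀ i, (T i i).re = 0 → |(T i i).im| < 1) : Good T := by
  cases isEmpty_or_nonempty (Fin n) with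
  | inl hemp =>
    refine ⟨0, 0, 1, one_pos, ?_, ?_⟩ <;>
      · intro v
        simp [nrm, qf, dotProduct, Finset.univ_eq_empty]
  | inr hne =>
    -- choose s, q
    have hch : ∀ i, ∃ s q : ℝ, 0 < q ∧
        0 < 2 * (T i i).re * s + q * (1 - Complex.normSq (T i i)) :=
      fun i => scalar_choice _ (hdiag i)
    choose s q hq hm using hch
    set m : Fin n → ℝ := fun i => 2 * (T i i).re * s i + q i * (1 - Complex.normSq (T i i))
      with hmdef
    set S : Matrix (Fin n) (Fin n) ℂ := Matrix.diagonal (fun i => (s i : ℂ)) with hS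
    set Q : Matrix (Fin n) (Fin n) ℂ := Matrix.diagonal (fun i => (q i : ℂ)) with hQd
    set Λ : Matrix (Fin n) (Fin n) ℂ := Matrix.diagonal (fun i => T i i) with hΛ
    have hfΛ : Λᴴ * S + S * Λ + Q - Λᴴ * Q * Λ = Matrix.diagonal (fun i => (m i : ℂ)) := by
      rw [hΛ, hS, hQd, Matrix.diagonal_conjTranspose]
      simp only [Matrix.diagonal_mul_diagonal, Matrix.diagonal_add, Matrix.diagonal_sub]
      refine congrArg Matrix.diagonal (funext fun i => ?_)
      simp only [Pi.star_apply, RCLike.star_def, hmdef]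
      apply Complex.ext <;>
        simp [Complex.normSq_apply, Complex.mul_re, Complex.mul_im, Complex.add_re,
          Complex.add_im] <;> ring
    -- lower bounds for diagonal forms
    obtain ⟨i0, -, hi0⟩ := Finset.exists_mem_eq_inf' (Finset.univ_nonempty) m
    obtain ⟨i1, -, hi1⟩ := Finset.exists_mem_eq_inf' (Finset.univ_nonempty) q
    set c0 : ℝ := Finset.univ.inf' Finset.univ_nonempty m with hc0def
    set q0 : ℝ := Finset.univ.inf' Finset.univ_nonempty q with hq0def
    have hc0 : 0 < c0 := by rw [hi0]; exact hm i0
    have hq0 : 0 < q0 := by rw [hi1]; exact hq i1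
    have hc0le : ∀ i, c0 ≤ m i := fun i => Finset.inf'_le _ (Finset.mem_univ i)
    have hq0le : ∀ i, q0 ≤ q i := fun i => Finset.inf'_le _ (Finset.mem_univ i)
    have hQlb : ∀ v, q0 * nrm v ≤ qf Q v := by
      intro v
      rw [hQd, qf_diag]
      unfold nrm
      rw [Finset.mul_sum]
      exact Finset.sum_le_sum fun i _ =>
        mul_le_mul_of_nonneg_right (hq0le i) (Complex.normSq_nonneg _)
    have hΛlb : ∀ v, c0 * nrm v ≤ qf (Λᴴ * S + S * Λ + Q - Λᴴ * Q * Λ) v := by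
      intro v
      rw [hfΛ, qf_diag]
      unfold nrm
      rw [Finset.mul_sum]
      exact Finset.sum_le_sum fun i _ =>
        mul_le_mul_of_nonneg_right (hc0le i) (Complex.normSq_nonneg _)
    -- the scaled matrices
    set D : ℕ → Matrix (Fin n) (Fin n) ℂ :=
      fun d => Matrix.diagonal (fun i : Fin n => ((d:ℂ)) ^ (i:ℕ)) with hD
    set D' : ℕ → Matrix (Fin n) (Fin n) ℂ :=
      fun d => Matrix.diagonal (fun i : Fin n => (((d:ℂ)) ^ (i:ℕ))⁻¹) with hD'
    set B : ℕ → Matrix (Fin n) (Fin n) ℂ := fun d => D d * T * D' d with hB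
    have hdne : ∀ d : ℕ, 1 ≤ d → ((d:ℂ)) ≠ 0 := by
      intro d hd
      simp only [ne_eq, Nat.cast_eq_zero]
      omega
    have hDD' : ∀ d : ℕ, 1 ≤ d → D d * D' d = 1 ∧ D' d * D d = 1 := by
      intro d hd
      constructor <;>
      · rw [hD, hD', Matrix.diagonal_mul_diagonal, ← Matrix.diagonal_one]
        congr 1
        funext i
        field_simp [pow_ne_zero _ (hdne d hd)]
    -- entrywise convergence of B to Λ
    have hent : ET B Λ := by
      intro i j
      have hBentry : ∀ d : ℕ, B d i j = (d:ℂ) ^ (i:ℕ) * T i j * ((d:ℂ) ^ (j:ℕ))⁻¹ := by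
        intro d
        show (Matrix.diagonal (fun i : Fin n => ((d:ℂ)) ^ (i:ℕ)) * T *
          Matrix.diagonal (fun i : Fin n => (((d:ℂ)) ^ (i:ℕ))⁻¹)) i j = _
        rw [Matrix.mul_diagonal, Matrix.diagonal_mul]
      simp only [hBentry]
      rcases lt_trichotomy (i:ℕ) (j:ℕ) with hij | hij | hij
      · -- tends to 0 = Λ i j
        have hΛ0 : Λ i j = 0 := by
          rw [hΛ, Matrix.diagonal_apply_ne]
          intro hc; rw [hc] at hij; omega
        rw [hΛ0]
        rw [tendsto_zero_iff_norm_tendsto_zero]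
        have hbound : ∀ d : ℕ, 1 ≤ d →
            ‖(d:ℂ) ^ (i:ℕ) * T i j * ((d:ℂ) ^ (j:ℕ))⁻¹‖ ≤ ‖T i j‖ * (1 / d) := by
          intro d hd
          have hdr : (1:ℝ) ≤ (d:ℝ) := by exact_mod_cast hd
          have hdr0 : (0:ℝ) < (d:ℝ) := by linarith
          rw [norm_mul, norm_mul, norm_inv, norm_pow, norm_pow]
          simp only [Complex.norm_natCast]
          have hpow : (d:ℝ) ^ (i:ℕ) * ((d:ℝ) ^ (j:ℕ))⁻¹ ≤ 1 / d := by
            rw [div_eq_mul_inv, one_mul]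
            have h1 : (d:ℝ) ^ ((i:ℕ)+1) ≤ (d:ℝ) ^ (j:ℕ) :=
              pow_le_pow_right₀ hdr (by omega)
            have h2 : (0:ℝ) < (d:ℝ) ^ (j:ℕ) := pow_pos hdr0 _
            rw [inv_le_inv₀ h2 (by positivity) |>.symm] at h1
            calc (d:ℝ) ^ (i:ℕ) * ((d:ℝ) ^ (j:ℕ))⁻¹
                ≤ (d:ℝ) ^ (i:ℕ) * ((d:ℝ) ^ ((i:ℕ)+1))⁻¹ := by
                  apply mul_le_mul_of_nonneg_left _ (by positivity)
                  rw [inv_le_inv₀ (by positivity) (by positivity)]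
                  exact pow_le_pow_right₀ hdr (by omega)
              _ = (d:ℝ)⁻¹ := by
                  rw [pow_succ]
                  field_simp
          calc (d:ℝ) ^ (i:ℕ) * ‖T i j‖ * ((d:ℝ) ^ (j:ℕ))⁻¹
              = ‖T i j‖ * ((d:ℝ) ^ (i:ℕ) * ((d:ℝ) ^ (j:ℕ))⁻¹) := by ring
            _ ≤ ‖T i j‖ * (1/d) := by
                apply mul_le_mul_of_nonneg_left hpow (norm_nonneg _)
            _ = ‖T i j‖ * (1/d) := rfl
        have htend : Filter.Tendsto (fun d : ℕ => ‖T i j‖ * (1 / (d:ℝ)))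
            Filter.atTop (nhds 0) := by
          have : Filter.Tendsto (fun n : ℕ => 1 / (n:ℝ)) Filter.atTop (nhds 0) :=
            tendsto_one_div_atTop_nhds_zero_nat
          simpa using this.const_mul (‖T i j‖)
        refine squeeze_zero' ?_ ?_ htend
        · exact Filter.Eventually.of_forall fun d => norm_nonneg _
        · filter_upwards [Filter.eventually_ge_atTop 1] with d hd
          exact hbound d hd
      · -- i = j : eventually constant T i i
        have hijeq : i = j := Fin.ext hij
        subst hijeq
        have hΛd : Λ i i = T i i := by rw [hΛ, Matrix.diagonal_apply_eq]
        rw [hΛd]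
        apply Filter.Tendsto.congr' _ tendsto_const_nhds
        filter_upwards [Filter.eventually_ge_atTop 1] with d hd
        field_simp [pow_ne_zero _ (hdne d hd)]
      · -- j < i : both sides 0
        have hT0 : T i j = 0 := htri i j (by omega)
        have hΛ0 : Λ i j = 0 := by
          rw [hΛ, Matrix.diagonal_apply_ne]
          intro hc; rw [hc] at hij; omega
        simp [hT0, hΛ0]
    -- convergence of the error sum
    set f : Matrix (Fin n) (Fin n) ℂ → Matrix (Fin n) (Fin n) ℂ :=
      fun X => Xᴴ * S + S * X + Q - Xᴴ * Q * X with hf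
    have hfet : ET (fun d => f (B d)) (f Λ) := by
      apply ET.sub
      · exact ((hent.ctrans.mul (ET.const S)).add ((ET.const S).mul hent)).add (ET.const Q)
      · exact (hent.ctrans.mul (ET.const Q)).mul hent
    have herr : Filter.Tendsto
        (fun d => ∑ i, ∑ j, ‖(f (B d) - f Λ) i j‖) Filter.atTop (nhds 0) := by
      have h0 : (0:ℝ) = ∑ i : Fin n, ∑ j : Fin n, (0:ℝ) := by simp
      rw [h0]
      apply tendsto_finset_sum
      intro i _
      apply tendsto_finset_sum
      intro j _
      have : Filter.Tendsto (fun d => (f (B d) - f Λ) i j) Filter.atTop (nhds 0) := by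
        have := (hfet.sub (ET.const (f Λ))) i j
        simpa using this
      simpa [Function.comp_def] using (continuous_norm.tendsto 0).comp this
    -- pick d
    have hev : ∀ᶠ d : ℕ in Filter.atTop,
        (∑ i, ∑ j, ‖(f (B d) - f Λ) i j‖) < c0 / 2 ∧ 1 ≤ d := by
      refine Filter.Eventually.and ?_ (Filter.eventually_ge_atTop 1)
      exact herr.eventually_lt_const (by linarith)
    obtain ⟨d, hderr, hd1⟩ := hev.exists
    obtain ⟨hDD1, hDD2⟩ := hDD' d hd1
    -- Good (B d)
    have hGoodB : Good (B d) := by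
      refine ⟨S, Q, min (c0 / 2) q0, lt_min (by linarith) hq0, ?_, ?_⟩
      · intro v
        calc min (c0/2) q0 * nrm v ≤ q0 * nrm v :=
              mul_le_mul_of_nonneg_right (min_le_right _ _) (nrm_nonneg v)
          _ ≤ qf Q v := hQlb v
      · intro v
        have hsplit : (B d)ᴴ * S + S * B d + Q - (B d)ᴴ * Q * B d
            = (Λᴴ * S + S * Λ + Q - Λᴴ * Q * Λ) + (f (B d) - f Λ) := by
          rw [hf]
          noncomm_ring
        rw [hsplit, qf_add]
        have h1 := hΛlb v
        have habs := qf_abs_le (f (B d) - f Λ) v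
        have herr' : (∑ i, ∑ j, ‖(f (B d) - f Λ) i j‖) * nrm v
            ≤ (c0/2) * nrm v :=
          mul_le_mul_of_nonneg_right hderr.le (nrm_nonneg v)
        have h2 : -(c0/2 * nrm v) ≤ qf (f (B d) - f Λ) v := by
          have hna := neg_abs_le (qf (f (B d) - f Λ) v)
          linarith
        have h3 : min (c0/2) q0 * nrm v ≤ (c0/2) * nrm v :=
          mul_le_mul_of_nonneg_right (min_le_left _ _) (nrm_nonneg v)
        linarith
    -- transport back
    have hTeq : D' d * (B d) * D d = T := by
      rw [hB]
      calc D' d * (D d * T * D' d) * D d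
          = (D' d * D d) * T * (D' d * D d) := by noncomm_ring
        _ = T := by rw [hDD2]; noncomm_ring
    have := hGoodB.transport hDD2 hDD1
    rwa [hTeq] at this

/-- embed an `n × n` matrix as the lower-right block with a `1` in the corner -/
def lift {n : ℕ} (X : Matrix (Fin n) (Fin n) ℂ) : Matrix (Fin (n+1)) (Fin (n+1)) ℂ :=
  Matrix.of fun i j => Fin.cases (Fin.cases (1:ℂ) (fun _ => 0) j)
    (fun i' => Fin.cases (0:ℂ) (fun j' => X i' j') j) i

@[simp] lemma lift_00 {n : ℕ} (X : Matrix (Fin n) (Fin n) ℂ) : lift X 0 0 = 1 := rfl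
@[simp] lemma lift_0s {n : ℕ} (X : Matrix (Fin n) (Fin n) ℂ) (j : Fin n) :
    lift X 0 j.succ = 0 := by simp [lift]
@[simp] lemma lift_s0 {n : ℕ} (X : Matrix (Fin n) (Fin n) ℂ) (i : Fin n) :
    lift X i.succ 0 = 0 := by simp [lift]
@[simp] lemma lift_ss {n : ℕ} (X : Matrix (Fin n) (Fin n) ℂ) (i j : Fin n) :
    lift X i.succ j.succ = X i j := by simp [lift]

lemma lift_mul {n : ℕ} (X Y : Matrix (Fin n) (Fin n) ℂ) :
    lift X * lift Y = lift (X * Y) := by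
  ext i j
  rw [Matrix.mul_apply, Fin.sum_univ_succ]
  induction i using Fin.cases with
  | zero =>
    induction j using Fin.cases with
    | zero => simp
    | succ j' => simp
  | succ i' =>
    induction j using Fin.cases with
    | zero => simp
    | succ j' => simp [Matrix.mul_apply]

lemma lift_one {n : ℕ} : lift (1 : Matrix (Fin n) (Fin n) ℂ) = 1 := by
  ext i j
  induction i using Fin.cases with
  | zero =>
    induction j using Fin.cases with
    | zero => simp [Matrix.one_apply]
    | succ j' => simp [Matrix.one_apply, (Fin.succ_ne_zero j').symm]
  | succ i' =>
    induction j using Fin.cases with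
    | zero => simp [Matrix.one_apply, Fin.succ_ne_zero i']
    | succ j' => simp [Matrix.one_apply, Fin.succ_inj]

lemma lift_mulVec_single {n : ℕ} (X : Matrix (Fin n) (Fin n) ℂ) :
    lift X *ᵥ Pi.single (0 : Fin (n+1)) (1:ℂ) = Pi.single 0 1 := by
  funext i
  rw [Matrix.mulVec_single]
  induction i using Fin.cases with
  | zero => simp
  | succ i' => simp [Fin.succ_ne_zero i']

lemma lift_conj_entry {n : ℕ} (X Y : Matrix (Fin n) (Fin n) ℂ)
    (M : Matrix (Fin (n+1)) (Fin (n+1)) ℂ) (i j : Fin n) :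
    (lift X * M * lift Y) i.succ j.succ
      = (X * Matrix.of (fun a b : Fin n => M a.succ b.succ) * Y) i j := by
  rw [Matrix.mul_assoc, Matrix.mul_assoc, Matrix.mul_apply, Fin.sum_univ_succ]
  simp only [lift_s0, zero_mul, zero_add, lift_ss]
  rw [Matrix.mul_apply]
  refine Finset.sum_congr rfl fun l _ => ?_
  congr 1
  rw [Matrix.mul_apply, Matrix.mul_apply, Fin.sum_univ_succ]
  simp only [lift_0s, mul_zero, zero_add, lift_ss, Matrix.of_apply]

theorem exists_triangularization : ∀ (n : ℕ) (A : Matrix (Fin n) (Fin n) ℂ),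
    ∃ G G' T : Matrix (Fin n) (Fin n) ℂ, G * G' = 1 ∧ G' * G = 1 ∧ A = G * T * G' ∧
      ∀ i j : Fin n, j < i → T i j = 0 := by
  intro n
  induction n with
  | zero =>
    intro A
    exact ⟨1, 1, A, by simp, by simp, by simp, fun i _ _ => i.elim0⟩
  | succ n IH =>
    intro A
    -- eigenvector
    obtain ⟨μ, hμ⟩ := Module.End.exists_eigenvalue (Matrix.mulVecLin A)
    obtain ⟨v, hv⟩ := hμ.exists_hasEigenvector
    have hvv : A *ᵥ v = μ • v := by
      have := Module.End.mem_eigenspace_iff.mp hv.1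
      simpa [Matrix.mulVecLin_apply] using this
    have hv0 : v ≠ 0 := hv.2
    obtain ⟨k, hk⟩ := Function.ne_iff.mp hv0
    have hk : v k ≠ 0 := hk
    set τ := Equiv.swap (0 : Fin (n+1)) k with hτ
    set u : Fin (n+1) → ℂ := fun i => v (τ i) * (v k)⁻¹ with hu
    have hu0 : u 0 = 1 := by
      rw [hu]
      simp only [hτ, Equiv.swap_apply_left]
      field_simp
    set w : Fin (n+1) → ℂ := fun i => u i - (Pi.single (0 : Fin (n+1)) (1:ℂ) : Fin (n+1) → ℂ) i with hw
    have hw0 : w 0 = 0 := by simp [hw, hu0]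
    set X : Matrix (Fin (n+1)) (Fin (n+1)) ℂ :=
      Matrix.of (fun i j => if j = 0 then w i else 0) with hX
    have hXX : X * X = 0 := by
      ext i j
      rw [Matrix.mul_apply]
      rw [Finset.sum_eq_single 0]
      · by_cases h : j = (0 : Fin (n+1)) <;> simp [hX, h, hw0]
      · intro l _ hl
        simp [hX, hl]
      · simp
    set Pv : Matrix (Fin (n+1)) (Fin (n+1)) ℂ := 1 + X with hPv
    set Pv' : Matrix (Fin (n+1)) (Fin (n+1)) ℂ := 1 - X with hPv'
    have hPvPv' : Pv * Pv' = 1 := by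
      rw [hPv, hPv']
      have : (1 + X) * (1 - X) = 1 - X * X := by noncomm_ring
      rw [this, hXX, sub_zero]
    have hPv'Pv : Pv' * Pv = 1 := by
      rw [hPv, hPv']
      have : (1 - X) * (1 + X) = 1 - X * X := by noncomm_ring
      rw [this, hXX, sub_zero]
    set Tp : Matrix (Fin (n+1)) (Fin (n+1)) ℂ :=
      Matrix.of (fun i j => if i = τ j then 1 else 0) with hTp
    have hTpTp : Tp * Tp = 1 := by
      ext i j
      rw [Matrix.mul_apply, Finset.sum_eq_single (τ j)]
      · simp [hTp, hτ, Matrix.one_apply, Equiv.swap_apply_self]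
      · intro l _ hl
        simp [hTp, hl]
      · simp
    set P : Matrix (Fin (n+1)) (Fin (n+1)) ℂ := Tp * Pv with hP
    set P' : Matrix (Fin (n+1)) (Fin (n+1)) ℂ := Pv' * Tp with hP'
    have hPP' : P * P' = 1 := by
      rw [hP, hP', Matrix.mul_assoc, ← Matrix.mul_assoc Pv, hPvPv', Matrix.one_mul, hTpTp]
    have hP'P : P' * P = 1 := by
      rw [hP', hP, Matrix.mul_assoc, ← Matrix.mul_assoc Tp, hTpTp, Matrix.one_mul, hPv'Pv]
    -- first column of P
    have hPe0 : P *ᵥ (Pi.single (0:Fin (n+1)) (1:ℂ) : Fin (n+1) → ℂ) = (v k)⁻¹ • v := by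
      rw [hP, ← Matrix.mulVec_mulVec]
      have h1 : Pv *ᵥ (Pi.single (0:Fin (n+1)) (1:ℂ) : Fin (n+1) → ℂ) = u := by
        funext i
        rw [hPv, Matrix.add_mulVec, Matrix.one_mulVec, Matrix.mulVec_single]
        simp only [Pi.add_apply, mul_one, hX, Matrix.of_apply, if_pos rfl, hw]
        simp
      rw [h1]
      funext i
      rw [hTp]
      rw [Matrix.mulVec]
      rw [dotProduct]
      rw [Finset.sum_eq_single (τ i)]
      · simp only [Matrix.of_apply, Equiv.swap_apply_self, if_pos rfl, one_mul, hu]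
        simp only [hτ, Equiv.swap_apply_self]
        simp [mul_comm]
      · intro l _ hl
        have : i ≠ τ l := by
          intro hc
          apply hl
          rw [hc, Equiv.swap_apply_self]
        simp [this]
      · simp
    set M : Matrix (Fin (n+1)) (Fin (n+1)) ℂ := P' * A * P with hM
    have hMe0 : M *ᵥ (Pi.single (0:Fin (n+1)) (1:ℂ) : Fin (n+1) → ℂ)
        = μ • (Pi.single (0:Fin (n+1)) (1:ℂ) : Fin (n+1) → ℂ) := by
      rw [hM, ← Matrix.mulVec_mulVec, ← Matrix.mulVec_mulVec, hPe0, Matrix.mulVec_smul, hvv]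
      rw [smul_comm ((v k)⁻¹) μ v, ← hPe0, Matrix.mulVec_smul, Matrix.mulVec_mulVec, hP'P,
        Matrix.one_mulVec]
    have hM0 : ∀ i : Fin n, M i.succ 0 = 0 := by
      intro i
      have := congrFun hMe0 i.succ
      rw [Matrix.mulVec_single] at this
      simpa [Fin.succ_ne_zero i] using this
    have hM00 : M 0 0 = μ := by
      have := congrFun hMe0 (0 : Fin (n+1))
      rw [Matrix.mulVec_single] at this
      simpa using this
    -- recurse
    obtain ⟨G₂, G₂', T₂, hG1, hG2, hGT, htri₂⟩ :=
      IH (Matrix.of fun a b : Fin n => M a.succ b.succ)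
    refine ⟨P * lift G₂, lift G₂' * P', lift G₂' * M * lift G₂, ?_, ?_, ?_, ?_⟩
    · rw [Matrix.mul_assoc, ← Matrix.mul_assoc (lift G₂), lift_mul, hG1, lift_one,
        Matrix.one_mul, hPP']
    · rw [Matrix.mul_assoc, ← Matrix.mul_assoc P', hP'P, Matrix.one_mul, lift_mul, hG2,
        lift_one]
    · have e1 : lift G₂ * lift G₂' = 1 := by rw [lift_mul, hG1, lift_one]
      calc A = P * M * P' := by
              rw [hM]
              calc A = (P * P') * A * (P * P') := by rw [hPP']; noncomm_ring
                _ = P * (P' * A * P) * P' := by noncomm_ring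
        _ = P * (lift G₂ * lift G₂') * M * (lift G₂ * lift G₂') * P' := by
              rw [e1]; noncomm_ring
        _ = P * lift G₂ * (lift G₂' * M * lift G₂) * (lift G₂' * P') := by noncomm_ring
    · intro i j hij
      induction i using Fin.cases with
      | zero => exact absurd hij (Fin.not_lt_zero j).elim
      | succ i' =>
        induction j using Fin.cases with
        | zero =>
          rw [Matrix.mul_assoc, Matrix.mul_apply, Fin.sum_univ_succ]
          simp only [lift_s0, zero_mul, zero_add]
          have hcol : ∀ l : Fin n, (M * lift G₂) l.succ 0 = 0 := by
            intro l
            rw [Matrix.mul_apply, Fin.sum_univ_succ]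
            simp only [lift_00, mul_one, lift_s0, mul_zero, Finset.sum_const_zero, add_zero]
            exact hM0 l
          simp [hcol]
        | succ j' =>
          rw [lift_conj_entry]
          have hsub : G₂' * Matrix.of (fun a b : Fin n => M a.succ b.succ) * G₂ = T₂ := by
            rw [hGT]
            calc G₂' * (G₂ * T₂ * G₂') * G₂ = (G₂' * G₂) * T₂ * (G₂' * G₂) := by noncomm_ring
              _ = T₂ := by rw [hG2]; noncomm_ring
          rw [hsub]
          exact htri₂ i' j' (by simpa [Fin.succ_lt_succ_iff] using hij)

lemma cast_mulVec {n : ℕ} (A : Matrix (Fin n) (Fin n) ℝ) (y : Fin n → ℝ) :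
    (A.map (fun a : ℝ => (a:ℂ))) *ᵥ (fun j => ((y j : ℝ) : ℂ))
      = fun j => ((A.mulVec y j : ℝ) : ℂ) := by
  funext j
  simp only [Matrix.mulVec, dotProduct, Matrix.map_apply]
  push_cast
  rfl

lemma bf_real {n : ℕ} (X : Matrix (Fin n) (Fin n) ℂ) (u w : Fin n → ℝ) :
    (star (fun j => ((u j : ℝ) : ℂ)) ⬝ᵥ X *ᵥ (fun k => ((w k : ℝ) : ℂ))).re
      = ∑ j, ∑ k, (X j k).re * (u j * w k) := by
  rw [dotProduct, Complex.re_sum]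
  refine Finset.sum_congr rfl fun j _ => ?_
  simp only [Pi.star_apply, RCLike.star_def, Complex.conj_ofReal]
  rw [Matrix.mulVec, dotProduct, Finset.mul_sum, Complex.re_sum]
  refine Finset.sum_congr rfl fun k _ => ?_
  simp [Complex.mul_re, Complex.mul_im]
  ring

lemma nrm_cast {n : ℕ} (y : Fin n → ℝ) :
    nrm (fun j => ((y j : ℝ) : ℂ)) = ∑ j, y j ^ 2 := by
  unfold nrm
  refine Finset.sum_congr rfl fun j _ => ?_
  rw [Complex.normSq_ofReal]
  ring

/-- the final key fact: `Good` holds for (the complexification of) any real matrix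
satisfying the spectral hypothesis -/
lemma good_of_heig {n : ℕ} (A : Matrix (Fin n) (Fin n) ℝ)
    (heig : ∀ t : ℝ,
      (∃ v : Fin n → ℂ, v ≠ 0 ∧
        (A.map (fun a => (a : ℂ))).mulVec v = (t * Complex.I) • v) → |t| < 1) :
    Good (A.map (fun a : ℝ => (a:ℂ))) := by
  set Ac := A.map (fun a : ℝ => (a:ℂ)) with hAc
  obtain ⟨G, G', Tm, h1, h2, hAGT, htri⟩ := exists_triangularization n Ac
  have hdiag : ∀ i, (Tm i i).re = 0 → |(Tm i i).im| < 1 := by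
    intro i hre
    set μ := Tm i i with hμ
    -- upper triangularity of Tm - μ • 1
    have htri' : (Tm - μ • (1 : Matrix (Fin n) (Fin n) ℂ)).BlockTriangular id := by
      intro a b hab
      simp only [Matrix.sub_apply, Matrix.smul_apply, Matrix.one_apply, smul_eq_mul]
      rw [htri a b hab, if_neg (by exact fun hc => absurd hc.symm (ne_of_lt hab))]
      simp
    have hdet : (Tm - μ • (1 : Matrix (Fin n) (Fin n) ℂ)).det = 0 := by
      rw [Matrix.det_of_upperTriangular htri']
      refine Finset.prod_eq_zero (Finset.mem_univ i) ?_
      simp [Matrix.sub_apply, Matrix.smul_apply, Matrix.one_apply_eq, hμ]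
    have hdetA : (Ac - μ • (1 : Matrix (Fin n) (Fin n) ℂ)).det = 0 := by
      have hfac : Ac - μ • (1 : Matrix (Fin n) (Fin n) ℂ)
          = G * (Tm - μ • (1 : Matrix (Fin n) (Fin n) ℂ)) * G' := by
        rw [Matrix.mul_sub, Matrix.sub_mul, ← hAGT]
        congr 1
        rw [Matrix.mul_smul, Matrix.smul_mul, Matrix.mul_one, h1]
      rw [hfac, Matrix.det_mul, Matrix.det_mul, hdet]
      ring
    obtain ⟨v, hv0, hv⟩ := (Matrix.exists_mulVec_eq_zero_iff).mpr hdetA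
    have hvec : Ac *ᵥ v = μ • v := by
      rw [Matrix.sub_mulVec] at hv
      have h1v : (μ • (1 : Matrix (Fin n) (Fin n) ℂ)) *ᵥ v = μ • v := by
        rw [Matrix.smul_mulVec, Matrix.one_mulVec]
      rw [h1v] at hv
      exact sub_eq_zero.mp hv
    have hμI : ((μ.im : ℂ)) * Complex.I = μ := by
      apply Complex.ext <;> simp [hre]
    refine heig μ.im ⟨v, hv0, ?_⟩
    rw [hμI]
    exact hvec
  have hGood := (good_triangular Tm htri hdiag).transport h1 h2
  rwa [← hAGT] at hGood

end St4

end St4Aux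

section St4Main
open Matrix Complex

/-- If every purely imaginary eigenvalue `it` of the real matrix `A`
satisfies `|t| < 1`, then there is a homogeneous quadratic polynomial whose imaginary
part separates `ℝⁿ` from the graph `{Ay + iy}`. -/
theorem statement4 (n : ℕ) (A : Matrix (Fin n) (Fin n) ℝ)
    (heig : ∀ t : ℝ,
      (∃ v : Fin n → ℂ, v ≠ 0 ∧
        (A.map (fun a => (a : ℂ))).mulVec v = (t * Complex.I) • v) → |t| < 1) :
    ∃ P : MvPolynomial (Fin n) ℂ, P.IsHomogeneous 2 ∧ ∃ C > (0:ℝ),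
      (∀ x : Fin n → ℝ,
        (MvPolynomial.eval (fun j => (x j : ℂ)) P).im ≤ -C * ∑ j, x j ^ 2) ∧
      (∀ y : Fin n → ℝ,
        C * ∑ j, y j ^ 2 ≤
          (MvPolynomial.eval (fun j => (A.mulVec y j : ℂ) + Complex.I * (y j : ℂ)) P).im) := by
  classical
  obtain ⟨S, Q, c, hc, hQ, hM⟩ := St4.good_of_heig A heig
  set Ac : Matrix (Fin n) (Fin n) ℂ := A.map (fun a : ℝ => (a:ℂ)) with hAc
  set Bm : Fin n → Fin n → ℂ := fun j k => ⟨(S j k).re, -((Q j k).re)⟩ with hBm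
  have heval : ∀ z : Fin n → ℂ,
      MvPolynomial.eval z (∑ j, ∑ k,
        MvPolynomial.C (Bm j k) * MvPolynomial.X j * MvPolynomial.X k)
      = ∑ j, ∑ k, Bm j k * z j * z k := by
    intro z
    rw [map_sum]
    refine Finset.sum_congr rfl fun j _ => ?_
    rw [map_sum]
    refine Finset.sum_congr rfl fun k _ => ?_
    simp
  refine ⟨∑ j, ∑ k, MvPolynomial.C (Bm j k) * MvPolynomial.X j * MvPolynomial.X k,
    ?_, c, hc, ?_, ?_⟩
  · -- homogeneity
    refine MvPolynomial.IsHomogeneous.sum _ _ _ fun j _ =>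
      MvPolynomial.IsHomogeneous.sum _ _ _ fun k _ => ?_
    have h0 : (MvPolynomial.C (Bm j k) : MvPolynomial (Fin n) ℂ).IsHomogeneous 0 :=
      MvPolynomial.isHomogeneous_C _ _
    have hx : (MvPolynomial.X j : MvPolynomial (Fin n) ℂ).IsHomogeneous 1 :=
      MvPolynomial.isHomogeneous_X _ _
    have hy : (MvPolynomial.X k : MvPolynomial (Fin n) ℂ).IsHomogeneous 1 :=
      MvPolynomial.isHomogeneous_X _ _
    simpa using (h0.mul hx).mul hy
  · -- bound on ℝⁿ
    intro x
    rw [heval]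
    have h1 : St4.qf Q (fun j => ((x j : ℝ) : ℂ)) = ∑ j, ∑ k, (Q j k).re * (x j * x k) :=
      St4.bf_real Q x x
    have h2 := hQ (fun j => ((x j : ℝ) : ℂ))
    rw [St4.nrm_cast] at h2
    have h3 : (∑ j, ∑ k, Bm j k * (x j : ℂ) * (x k : ℂ)).im
        = -∑ j, ∑ k, (Q j k).re * (x j * x k) := by
      rw [Complex.im_sum, ← Finset.sum_neg_distrib]
      refine Finset.sum_congr rfl fun j _ => ?_
      rw [Complex.im_sum, ← Finset.sum_neg_distrib]
      refine Finset.sum_congr rfl fun k _ => ?_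
      simp only [hBm, Complex.mul_im, Complex.mul_re, Complex.ofReal_re, Complex.ofReal_im]
      ring
    rw [h3, ← h1]
    have := h2.trans (le_of_eq rfl)
    linarith [h2, hc]
  · -- bound on the graph
    intro y
    rw [heval]
    set a : Fin n → ℝ := A.mulVec y with ha
    have hay : Ac *ᵥ (fun j => ((y j : ℝ) : ℂ)) = fun j => ((a j : ℝ) : ℂ) :=
      St4.cast_mulVec A y
    set yc : Fin n → ℂ := fun j => ((y j : ℝ) : ℂ) with hyc
    set ac : Fin n → ℂ := fun j => ((a j : ℝ) : ℂ) with hac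
    have q1 : St4.qf (Acᴴ * S) yc = ∑ j, ∑ k, (S j k).re * (a j * y k) := by
      show (star yc ⬝ᵥ (Acᴴ * S) *ᵥ yc).re = _
      rw [← Matrix.mulVec_mulVec, Matrix.dotProduct_mulVec, ← Matrix.star_mulVec, hay]
      exact St4.bf_real S a y
    have q2 : St4.qf (S * Ac) yc = ∑ j, ∑ k, (S j k).re * (y j * a k) := by
      show (star yc ⬝ᵥ (S * Ac) *ᵥ yc).re = _
      rw [← Matrix.mulVec_mulVec, hay]
      exact St4.bf_real S y a
    have q3 : St4.qf Q yc = ∑ j, ∑ k, (Q j k).re * (y j * y k) := St4.bf_real Q y y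
    have q4 : St4.qf (Acᴴ * Q * Ac) yc = ∑ j, ∑ k, (Q j k).re * (a j * a k) := by
      show (star yc ⬝ᵥ (Acᴴ * Q * Ac) *ᵥ yc).re = _
      rw [← Matrix.mulVec_mulVec, ← Matrix.mulVec_mulVec, hay, Matrix.dotProduct_mulVec,
        ← Matrix.star_mulVec, hay]
      exact St4.bf_real Q a a
    have hsplit : St4.qf (Acᴴ * S + S * Ac + Q - Acᴴ * Q * Ac) yc
        = (∑ j, ∑ k, (S j k).re * (a j * y k)) + (∑ j, ∑ k, (S j k).re * (y j * a k))
          + (∑ j, ∑ k, (Q j k).re * (y j * y k)) - ∑ j, ∑ k, (Q j k).re * (a j * a k) := by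
      rw [St4.qf_sub, St4.qf_add, St4.qf_add, q1, q2, q3, q4]
    have him : (∑ j, ∑ k, Bm j k * ((a j : ℂ) + Complex.I * (y j : ℂ))
          * ((a k : ℂ) + Complex.I * (y k : ℂ))).im
        = (∑ j, ∑ k, (S j k).re * (a j * y k)) + (∑ j, ∑ k, (S j k).re * (y j * a k))
          + (∑ j, ∑ k, (Q j k).re * (y j * y k)) - ∑ j, ∑ k, (Q j k).re * (a j * a k) := by
      rw [← Finset.sum_add_distrib, ← Finset.sum_add_distrib, ← Finset.sum_sub_distrib,
        Complex.im_sum]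
      refine Finset.sum_congr rfl fun j _ => ?_
      rw [← Finset.sum_add_distrib, ← Finset.sum_add_distrib, ← Finset.sum_sub_distrib,
        Complex.im_sum]
      refine Finset.sum_congr rfl fun k _ => ?_
      simp only [hBm, Complex.mul_im, Complex.mul_re, Complex.add_re, Complex.add_im,
        Complex.ofReal_re, Complex.ofReal_im, Complex.I_re, Complex.I_im]
      ring
    have hMy := hM yc
    rw [St4.nrm_cast, hsplit] at hMy
    calc c * ∑ j, y j ^ 2 ≤ _ := hMy
      _ = (∑ j, ∑ k, Bm j k * ((a j : ℂ) + Complex.I * (y j : ℂ))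
            * ((a k : ℂ) + Complex.I * (y k : ℂ))).im := him.symm

end St4Main
end
end

section
/- The holomorphic polynomial map f : ℂ² → ℂ² given by f(t,s) = (−3t³ − ts² − 3t⁵, s³ + 4t²s + 7st⁴) has an isolated zero at the origin: there exists a neighbourhood U of 0 in ℂ² such that f^{-1}(0) ∩ U = {0}. -/
open Set Metric MeasureTheory
open scoped Manifold

noncomputable section

/-- The holomorphic polynomial map
`f(t,s) = (−3t³ − ts² − 3t⁵, s³ + 4t²s + 7st⁴)` has an isolated zero at the origin. -/
theorem statement15 :
    ∃ U : Set (ℂ × ℂ), IsOpen U ∧ ((0, 0) : ℂ × ℂ) ∈ U ∧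
      ∀ p ∈ U,
        (-3 * p.1 ^ 3 - p.1 * p.2 ^ 2 - 3 * p.1 ^ 5 = 0 ∧
          p.2 ^ 3 + 4 * p.1 ^ 2 * p.2 + 7 * p.2 * p.1 ^ 4 = 0) →
        p = (0, 0) := by

  refine ⟨ball (0,0) (1/2), isOpen_ball, mem_ball_self (by norm_num), ?_⟩
  rintro ⟨t, s⟩ hp ⟨h1, h2⟩
  simp only [mem_ball, Prod.dist_eq, max_lt_iff, dist_zero_right] at hp
  obtain ⟨ht, hs⟩ := hp
  have ht2 : ‖t ^ 2‖ < 1 := by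
    rw [norm_pow]
    nlinarith [norm_nonneg t]
  -- factorizations
  have h1' : t * (3 * t ^ 2 + s ^ 2 + 3 * t ^ 4) = 0 := by linear_combination -h1
  have h2' : s * (s ^ 2 + 4 * t ^ 2 + 7 * t ^ 4) = 0 := by linear_combination h2
  have htz : t = 0 := by
    rcases mul_eq_zero.mp h1' with h | hA
    · exact h
    rcases mul_eq_zero.mp h2' with h | hB
    · -- s = 0, so 3t² + 3t⁴ = 0, i.e. 3t²(1 + t²) = 0
      have : 3 * t ^ 2 * (1 + t ^ 2) = 0 := by
        rw [h] at hA; linear_combination hA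
      rcases mul_eq_zero.mp this with h' | h'
      · have : t ^ 2 = 0 := by linear_combination (1/3 : ℂ) * h'
        exact pow_eq_zero_iff (n := 2) (by norm_num) |>.mp this
      · exfalso
        have : t ^ 2 = -1 := by linear_combination h'
        rw [this] at ht2; simp at ht2
    · -- both A=0 and B=0: t²(1+4t²)=0
      have : t ^ 2 * (1 + 4 * t ^ 2) = 0 := by linear_combination hB - hA
      rcases mul_eq_zero.mp this with h' | h'
      · exact pow_eq_zero_iff (n := 2) (by norm_num) |>.mp h'
      · exfalso
        have h4 : t ^ 2 = -(1/4) := by linear_combination (1/4) * h'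
        have h5 : ‖t‖ ^ 2 = 1 / 4 := by
          have := congrArg norm h4
          rw [norm_pow] at this
          simpa using this
        nlinarith [norm_nonneg t]
  subst htz
  have : s ^ 3 = 0 := by linear_combination h2
  have hsz : s = 0 := pow_eq_zero_iff (n := 3) (by norm_num) |>.mp this
  simp [hsz]
end
end
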